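/- Fix E ∈ ℝ and n ≥ 1. Almost surely, H_{n,n} − E is invertible and ⟨φ_n, (H_{n,n} − E)^{−1} φ_n⟩ ≠ 0, and the random variable Φ_n(E) := (⟨φ_n, (H_{n,n} − E)^{−1} φ_n⟩)^{−1} has the same distribution as W^{(n)}_0, the output of the renormalization recursion applied to 2^n i.i.d. inputs distributed as V − E with V ~ ρ. In particular, the law of Φ_n(E) is absolutely continuous with density T_{p_n}···T_{p_1}ρ_E, where ρ_E(v) = ρ(v+E). -/

import Mathlib

open MeasureTheory ProbabilityTheory Matrix Filter Topology

noncomputable section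

/-- Hierarchical (ultrametric) distance on `ℕ₀ = {0,1,2,…}`:
`d(j,k) = min {r ≥ 0 | ⌊j/2^r⌋ = ⌊k/2^r⌋}`. -/
def hdist (j k : ℕ) : ℕ := sInf {r | j / 2 ^ r = k / 2 ^ r}

lemma hdist_comm (j k : ℕ) : hdist j k = hdist k j := by
  unfold hdist; congr 1; ext r; exact eq_comm

/-- Matrix entry of the hierarchical Laplacian `Δ = ∑_{r ≥ 1} p_r E_r`,
restricted to a block `B_n` (the entry only depends on the hierarchical distance):
`Δ(j,k) = ∑_{r ≥ max(1, d(j,k))} p_r · 2^{-r}`. -/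
def lapEntry (p : ℕ → ℝ) (j k : ℕ) : ℝ :=
  ∑' r : ℕ, if 1 ≤ r ∧ hdist j k ≤ r then p r / 2 ^ r else 0

/-- Matrix entry of the truncated Laplacian `∑_{r = 1}^{m} p_r E_r`. -/
def lapEntryT (p : ℕ → ℝ) (m : ℕ) (j k : ℕ) : ℝ :=
  ∑ r ∈ Finset.Icc 1 m, if hdist j k ≤ r then p r / 2 ^ r else 0

/-- The finite-volume Hamiltonian `H_n = 1_{B_n} (Δ + V) 1_{B_n}`
as a real symmetric `2^n × 2^n` matrix. -/
def Hmat (p : ℕ → ℝ) (v : ℕ → ℝ) (n : ℕ) : Matrix (Fin (2 ^ n)) (Fin (2 ^ n)) ℝ :=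
  fun j k => lapEntry p j k + if j = k then v j else 0

/-- The truncated finite-volume Hamiltonian
`H_{n,m} = 1_{B_n} (∑_{r=1}^m p_r E_r + V) 1_{B_n}`. -/
def HmatT (p : ℕ → ℝ) (v : ℕ → ℝ) (n m : ℕ) : Matrix (Fin (2 ^ n)) (Fin (2 ^ n)) ℝ :=
  fun j k => lapEntryT p m j k + if j = k then v j else 0

lemma Hmat_isHermitian (p : ℕ → ℝ) (v : ℕ → ℝ) (n : ℕ) : (Hmat p v n).IsHermitian := by
  refine Matrix.ext fun j k => ?_
  simp only [conjTranspose_apply, star_trivial, Hmat, lapEntry, hdist_comm (k : ℕ) (j : ℕ)]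
  rcases eq_or_ne j k with h | h
  · subst h; rfl
  · simp [h, h.symm]

lemma HmatT_isHermitian (p : ℕ → ℝ) (v : ℕ → ℝ) (n m : ℕ) : (HmatT p v n m).IsHermitian := by
  refine Matrix.ext fun j k => ?_
  simp only [conjTranspose_apply, star_trivial, HmatT, lapEntryT, hdist_comm (k : ℕ) (j : ℕ)]
  rcases eq_or_ne j k with h | h
  · subst h; rfl
  · simp [h, h.symm]

/-- The site `0 ∈ B_n`. -/
def fin0 (n : ℕ) : Fin (2 ^ n) := ⟨0, Nat.two_pow_pos n⟩

/-- The hierarchical renormalization recursion: `W^{(0)}_k = x_k` and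
`W^{(j+1)}_k = (1/(2 W^{(j)}_{2k}) + 1/(2 W^{(j)}_{2k+1}))⁻¹ + p_{j+1}`. -/
def renIter (p : ℕ → ℝ) : ℕ → (ℕ → ℝ) → (ℕ → ℝ)
  | 0, x => x
  | (j + 1), x => fun k =>
      (1 / (2 * renIter p j x (2 * k)) + 1 / (2 * renIter p j x (2 * k + 1)))⁻¹ + p (j + 1)

/-- Non-concentration assumption on the set `I` with exponent `δ`: the law of the `r`-fold
renormalized potential `W^{(r)}_0` (started from i.i.d. inputs `V_k - E`) is absolutely
continuous with a density `T_{p_r} ⋯ T_{p_1} ρ_E` bounded by `K · 2^{(c-δ) r}`, uniformly in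
`E ∈ I`; equivalently, `P(W^{(r)}_0 ∈ A) ≤ K · 2^{(c-δ) r} · |A|` for every Borel set `A`. -/
def NonConc {Ω : Type*} [MeasurableSpace Ω] (Pr : Measure Ω)
    (p : ℕ → ℝ) (V : ℕ → Ω → ℝ) (I : Set ℝ) (c δ : ℝ) : Prop :=
  ∃ K : ℝ, 0 ≤ K ∧ ∀ r : ℕ, 1 ≤ r → ∀ E ∈ I, ∀ A : Set ℝ, MeasurableSet A →
    Pr {ω | renIter p r (fun k => V k ω - E) 0 ∈ A} ≤
      ENNReal.ofReal (K * 2 ^ ((c - δ) * r)) * volume A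

/-- `2k ∈ B_{n+1}` for `k ∈ B_n`. -/
def dblFin {n : ℕ} (k : Fin (2 ^ n)) : Fin (2 ^ (n + 1)) :=
  ⟨2 * k, by have h := k.isLt; rw [pow_succ]; omega⟩

/-- `2k + 1 ∈ B_{n+1}` for `k ∈ B_n`. -/
def dblFin1 {n : ℕ} (k : Fin (2 ^ n)) : Fin (2 ^ (n + 1)) :=
  ⟨2 * k + 1, by have h := k.isLt; rw [pow_succ]; omega⟩

/-- Hopping sequence `(p_{r+1})_{r ≥ 1}` of the renormalized model. -/
def shiftSeq (p : ℕ → ℝ) : ℕ → ℝ := fun r => p (r + 1)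

/-- The renormalized potential `(RV)_k = 2 V_{2k} V_{2k+1}/(V_{2k} + V_{2k+1}) + p_1`. -/
def renPotM (p : ℕ → ℝ) (v : ℕ → ℝ) : ℕ → ℝ :=
  fun k => 2 * v (2 * k) * v (2 * k + 1) / (v (2 * k) + v (2 * k + 1)) + p 1

/-- The renormalized potential `(RV)_k = (1/(2 V_{2k}) + 1/(2 V_{2k+1}))⁻¹ + p_1`. -/
def renPotH (p : ℕ → ℝ) (v : ℕ → ℝ) : ℕ → ℝ :=
  fun k => (1 / (2 * v (2 * k)) + 1 / (2 * v (2 * k + 1)))⁻¹ + p 1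

/-- The isometry `U_e : ℓ²(B_n) → ℓ²(B_{n+1})`, `U_e δ_k = (δ_{2k} + δ_{2k+1})/√2`,
as a `2^{n+1} × 2^n` matrix. -/
def Uemat (n : ℕ) : Matrix (Fin (2 ^ (n + 1))) (Fin (2 ^ n)) ℝ :=
  fun j k => if (j : ℕ) = 2 * k then (Real.sqrt 2)⁻¹
    else if (j : ℕ) = 2 * k + 1 then (Real.sqrt 2)⁻¹ else 0

/-- The isometry `U_f : ℓ²(B_n) → ℓ²(B_{n+1})`, `U_f δ_k = (δ_{2k} - δ_{2k+1})/√2`,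
as a `2^{n+1} × 2^n` matrix. -/
def Ufmat (n : ℕ) : Matrix (Fin (2 ^ (n + 1))) (Fin (2 ^ n)) ℝ :=
  fun j k => if (j : ℕ) = 2 * k then (Real.sqrt 2)⁻¹
    else if (j : ℕ) = 2 * k + 1 then -(Real.sqrt 2)⁻¹ else 0

/-- The unitary `U = U_e ⊕ U_f : ℓ²(B_n) ⊕ ℓ²(B_n) → ℓ²(B_{n+1})`. -/
def Umat (n : ℕ) : Matrix (Fin (2 ^ (n + 1))) (Fin (2 ^ n) ⊕ Fin (2 ^ n)) ℝ :=
  Matrix.fromCols (Uemat n) (Ufmat n)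

/-- `V_ff = V_ee`: multiplication by `(V_{2k} + V_{2k+1})/2` on `ℓ²(B_n)`. -/
def Vffmat (v : ℕ → ℝ) (n : ℕ) : Matrix (Fin (2 ^ n)) (Fin (2 ^ n)) ℝ :=
  Matrix.diagonal fun k => (v (2 * k) + v (2 * k + 1)) / 2

/-- `V_fe = V_ef`: multiplication by `(V_{2k} - V_{2k+1})/2` on `ℓ²(B_n)`. -/
def Vfemat (v : ℕ → ℝ) (n : ℕ) : Matrix (Fin (2 ^ n)) (Fin (2 ^ n)) ℝ :=
  Matrix.diagonal fun k => (v (2 * k) - v (2 * k + 1)) / 2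

/-- The operator `S = U_e^* - V_fe V_ff^{-1} U_f^* : ℓ²(B_{n+1}) → ℓ²(B_n)`. -/
def Smat (v : ℕ → ℝ) (n : ℕ) : Matrix (Fin (2 ^ n)) (Fin (2 ^ (n + 1))) ℝ :=
  (Uemat n)ᵀ - Vfemat v n * (Vffmat v n)⁻¹ * (Ufmat n)ᵀ

/-- The maximally delocalized vector `φ_n = 2^{-n/2} 1_{B_n}`. -/
def phiVec (n : ℕ) : Fin (2 ^ n) → ℝ := fun _ => (Real.sqrt (2 ^ n))⁻¹

end

/-!
All hopping terms `p_r E_r` see a pair `{2j, 2j+1}` only through `x_{2j} + x_{2j+1}`: `E₁` as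
its half, the coarser ones as half the Laplacian with hopping `p_{r+1}` on `B_n`. Hence solving
`H_{n+1} x = b` with `b` constant on pairs forces `V_{2j} x_{2j} = V_{2j+1} x_{2j+1}`, and the
pair sums solve `H'_n y = 2b`, where `H'_n` has hopping `p_{r+1}` and potential
`(1/(2V_{2j}) + 1/(2V_{2j+1}))⁻¹ + p₁`: one step of the renormalization recursion. As `φ_{n+1}`
is constant on pairs, induction on `n` shows that `H_n` is invertible with
`⟨φ_n, H_n⁻¹ φ_n⟩ = (W^{(n)}_0)⁻¹` whenever no division by zero occurs along the recursion.

Almost surely none occurs: `W^{(j)}_k` only depends on the inputs in the block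
`[k 2^j, (k+1) 2^j)`, so siblings are independent, and a recursion step maps independent
absolutely continuous variables to an absolutely continuous one, since for fixed `a ≠ 0` the map
`b ↦ (1/(2a) + 1/(2b))⁻¹` is a Möbius map.
-/

open Finset

lemma hdist_le_iff {j k r : ℕ} : hdist j k ≤ r ↔ j / 2 ^ r = k / 2 ^ r := by
  have hmono : Monotone fun r => j / 2 ^ r = k / 2 ^ r := by
    refine monotone_nat_of_le_succ fun r (h : j / 2 ^ r = k / 2 ^ r) => ?_
    rw [pow_succ, ← Nat.div_div_eq_div_mul, ← Nat.div_div_eq_div_mul, h]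
  have hne : {r | j / 2 ^ r = k / 2 ^ r}.Nonempty := ⟨j + k, by
    rw [Set.mem_ofPred_eq, Nat.div_eq_of_lt, Nat.div_eq_of_lt] <;>
      exact lt_of_lt_of_le Nat.lt_two_pow_self (Nat.pow_le_pow_right two_pos (by omega))⟩
  exact ⟨fun h => hmono h (Nat.sInf_mem hne), fun h => Nat.sInf_le h⟩

lemma hdist_two_mul_add_le_succ_iff {j k s t : ℕ} (hs : s < 2) (ht : t < 2) (r : ℕ) :
    hdist (2 * j + s) (2 * k + t) ≤ r + 1 ↔ hdist j k ≤ r := by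
  have hdiv : ∀ i u, u < 2 → (2 * i + u) / 2 ^ (r + 1) = i / 2 ^ r := fun i u hu => by
    rw [pow_succ', ← Nat.div_div_eq_div_mul, show (2 * i + u) / 2 = i by omega]
  rw [hdist_le_iff, hdist_le_iff, hdiv j s hs, hdiv k t ht]

lemma lapEntryT_eq_sum_range (p : ℕ → ℝ) (m a b : ℕ) :
    lapEntryT p m a b =
      ∑ r ∈ range m, if hdist a b ≤ r + 1 then p (r + 1) / 2 ^ (r + 1) else 0 := by
  rw [lapEntryT, range_eq_Ico, sum_Ico_add' (fun r => if hdist a b ≤ r then p r / 2 ^ r else 0)]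
  rfl

lemma lapEntryT_two_mul_add (p : ℕ → ℝ) (m : ℕ) {j k s t : ℕ} (hs : s < 2) (ht : t < 2) :
    lapEntryT p (m + 1) (2 * j + s) (2 * k + t) =
      (if j = k then p 1 / 2 else 0) + lapEntryT (shiftSeq p) m j k / 2 := by
  rw [lapEntryT_eq_sum_range, lapEntryT_eq_sum_range, sum_range_succ', sum_div, add_comm]
  congr 1
  · simp only [zero_add, hdist_two_mul_add_le_succ_iff hs ht 0, hdist_le_iff, pow_zero, Nat.div_one,
      pow_one]
  · refine sum_congr rfl fun r _ => ?_
    simp only [hdist_two_mul_add_le_succ_iff hs ht, shiftSeq]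
    split_ifs <;> simp [pow_succ]; ring

noncomputable def lapMat (p : ℕ → ℝ) (n m : ℕ) : Matrix (Fin (2 ^ n)) (Fin (2 ^ n)) ℝ :=
  Matrix.of fun j k => lapEntryT p m j k

lemma HmatT_eq_lapMat_add_diagonal (p v : ℕ → ℝ) (n m : ℕ) :
    HmatT p v n m = lapMat p n m + diagonal fun j : Fin (2 ^ n) => v j := by
  ext j k
  simp [HmatT, lapMat, diagonal_apply]

lemma HmatT_sub_const (p v : ℕ → ℝ) (n m : ℕ) (E : ℝ) :
    HmatT p (fun i => v i - E) n m =
      HmatT p v n m - E • (1 : Matrix (Fin (2 ^ n)) (Fin (2 ^ n)) ℝ) := by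
  ext j k
  by_cases h : j = k <;> simp [HmatT, one_apply, h, add_sub_assoc]

def pairEquiv (n : ℕ) : Fin (2 ^ n) × Fin 2 ≃ Fin (2 ^ (n + 1)) :=
  finProdFinEquiv.trans (finCongr (pow_succ 2 n).symm)

@[simp]
lemma val_pairEquiv (n : ℕ) (k : Fin (2 ^ n)) (t : Fin 2) :
    (pairEquiv n (k, t) : ℕ) = 2 * k + t := by
  simp [pairEquiv, finProdFinEquiv, add_comm, mul_comm]

lemma sum_pairEquiv {M : Type*} [AddCommMonoid M] (n : ℕ) (f : Fin (2 ^ (n + 1)) → M) :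
    ∑ m, f m = ∑ k, (f (pairEquiv n (k, 0)) + f (pairEquiv n (k, 1))) := by
  rw [← (pairEquiv n).sum_comp, Fintype.sum_prod_type]
  simp [Fin.sum_univ_two]

/-- `√2 U_e^*`, see `Uemat`. -/
def pairSum {n : ℕ} (x : Fin (2 ^ (n + 1)) → ℝ) : Fin (2 ^ n) → ℝ :=
  fun k => x (pairEquiv n (k, 0)) + x (pairEquiv n (k, 1))

lemma lapMat_mulVec_pairEquiv (p : ℕ → ℝ) (n : ℕ) (x : Fin (2 ^ (n + 1)) → ℝ)
    (j : Fin (2 ^ n)) (s : Fin 2) :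
    (lapMat p (n + 1) (n + 1) *ᵥ x) (pairEquiv n (j, s)) =
      p 1 / 2 * pairSum x j + (lapMat (shiftSeq p) n n *ᵥ pairSum x) j / 2 := by
  have hentry : ∀ (k : Fin (2 ^ n)) (t : Fin 2), lapMat p (n + 1) (n + 1) (pairEquiv n (j, s))
      (pairEquiv n (k, t)) = (if j = k then p 1 / 2 else 0) + lapMat (shiftSeq p) n n j k / 2 :=
    fun k t => by
      simp only [lapMat, of_apply, val_pairEquiv, lapEntryT_two_mul_add p n s.isLt t.isLt,
        Fin.val_inj]
  calc (lapMat p (n + 1) (n + 1) *ᵥ x) (pairEquiv n (j, s))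
      = ∑ k, ((if j = k then p 1 / 2 else 0) + lapMat (shiftSeq p) n n j k / 2) * pairSum x k := by
        simp only [mulVec, dotProduct, sum_pairEquiv, hentry, pairSum, mul_add]
    _ = _ := by
        simp only [add_mul, sum_add_distrib, ite_mul, zero_mul, sum_ite_eq, mem_univ, if_true,
          mulVec, dotProduct, sum_div, div_mul_eq_mul_div]

lemma HmatT_mulVec_pairEquiv (p v : ℕ → ℝ) (n : ℕ) (x : Fin (2 ^ (n + 1)) → ℝ)
    (j : Fin (2 ^ n)) (s : Fin 2) :
    (HmatT p v (n + 1) (n + 1) *ᵥ x) (pairEquiv n (j, s)) =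
      p 1 / 2 * pairSum x j + (lapMat (shiftSeq p) n n *ᵥ pairSum x) j / 2 +
        v (2 * j + s) * x (pairEquiv n (j, s)) := by
  rw [HmatT_eq_lapMat_add_diagonal, add_mulVec, Pi.add_apply, lapMat_mulVec_pairEquiv,
    mulVec_diagonal, val_pairEquiv]

lemma Matrix.inv_mulVec_eq_of_mulVec_eq {ι K : Type*} [Fintype ι] [DecidableEq ι] [Field K]
    {A : Matrix ι ι K} (hA : A.det ≠ 0) {u b : ι → K} (h : A *ᵥ u = b) : A⁻¹ *ᵥ b = u := by
  rw [← h, mulVec_mulVec, nonsing_inv_mul _ (isUnit_iff_ne_zero.2 hA), one_mulVec]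

lemma Matrix.mulVec_inv_mulVec {ι K : Type*} [Fintype ι] [DecidableEq ι] [Field K]
    {A : Matrix ι ι K} (hA : A.det ≠ 0) (b : ι → K) : A *ᵥ (A⁻¹ *ᵥ b) = b := by
  rw [mulVec_mulVec, mul_nonsing_inv _ (isUnit_iff_ne_zero.2 hA), one_mulVec]

lemma phiVec_succ_apply (n : ℕ) (m : Fin (2 ^ (n + 1))) (k : Fin (2 ^ n)) :
    phiVec (n + 1) m = (√2)⁻¹ * phiVec n k := by
  simp only [phiVec]
  rw [pow_succ', Real.sqrt_mul zero_le_two, mul_inv]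

lemma phiVec_succ_dotProduct (n : ℕ) (x : Fin (2 ^ (n + 1)) → ℝ) :
    phiVec (n + 1) ⬝ᵥ x = (√2)⁻¹ * (phiVec n ⬝ᵥ pairSum x) := by
  simp only [dotProduct, sum_pairEquiv, mul_sum, pairSum]
  refine sum_congr rfl fun k _ => ?_
  rw [phiVec_succ_apply n _ k, phiVec_succ_apply n _ k]
  ring

noncomputable def renStep (q a b : ℝ) : ℝ := (1 / (2 * a) + 1 / (2 * b))⁻¹ + q

lemma renIter_succ_apply (p : ℕ → ℝ) (j : ℕ) (x : ℕ → ℝ) (k : ℕ) :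
    renIter p (j + 1) x k =
      renStep (p (j + 1)) (renIter p j x (2 * k)) (renIter p j x (2 * k + 1)) :=
  rfl

lemma renStep_eq_of_ne_zero {q a b : ℝ} (ha : a ≠ 0) (hb : b ≠ 0) :
    renStep q a b = 2 * a * b / (a + b) + q := by
  rw [renStep, show 1 / (2 * a) + 1 / (2 * b) = (a + b) / (2 * a * b) by field_simp; ring, inv_div]

lemma renIter_succ_eq_renIter_renPotH (p : ℕ → ℝ) (j : ℕ) (x : ℕ → ℝ) (k : ℕ) :
    renIter p (j + 1) x k = renIter (shiftSeq p) j (renPotH p x) k := by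
  induction j generalizing k with
  | zero => rfl
  | succ j ih => rw [renIter_succ_apply, ih, ih]; rfl

/-- No division by zero ever occurs in the renormalization recursion started from `x`. -/
def RenNondegenerate (p x : ℕ → ℝ) : Prop :=
  ∀ j k, renIter p j x k ≠ 0 ∧ renIter p j x (2 * k) + renIter p j x (2 * k + 1) ≠ 0

lemma RenNondegenerate.shiftSeq_renPotH {p x : ℕ → ℝ} (h : RenNondegenerate p x) :
    RenNondegenerate (shiftSeq p) (renPotH p x) := fun j k => by
  simpa only [renIter_succ_eq_renIter_renPotH] using h (j + 1) k

section Decimation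

variable {p v : ℕ → ℝ} {n : ℕ} {x : Fin (2 ^ (n + 1)) → ℝ} {b : Fin (2 ^ n) → ℝ}

lemma HmatT_mulVec_pair_balance
    (hx : ∀ j s, (HmatT p v (n + 1) (n + 1) *ᵥ x) (pairEquiv n (j, s)) = b j) (j : Fin (2 ^ n)) :
    v (2 * j) * x (pairEquiv n (j, 0)) = v (2 * j + 1) * x (pairEquiv n (j, 1)) := by
  have h0 := hx j 0
  have h1 := hx j 1
  rw [HmatT_mulVec_pairEquiv] at h0 h1
  simp only [Fin.val_zero, Fin.val_one, add_zero] at h0 h1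
  linarith

lemma HmatT_renPotH_mulVec_pairSum (hv : RenNondegenerate p v)
    (hx : ∀ j s, (HmatT p v (n + 1) (n + 1) *ᵥ x) (pairEquiv n (j, s)) = b j) :
    HmatT (shiftSeq p) (renPotH p v) n n *ᵥ pairSum x = (2 : ℝ) • b := by
  ext j
  have h0 := hx j 0
  have h1 := hx j 1
  rw [HmatT_mulVec_pairEquiv] at h0 h1
  simp only [Fin.val_zero, Fin.val_one, add_zero] at h0 h1
  have hbal := HmatT_mulVec_pair_balance hx j
  have ha : v (2 * j) ≠ 0 := (hv 0 (2 * j)).1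
  have hb : v (2 * j + 1) ≠ 0 := (hv 0 (2 * j + 1)).1
  have hab : v (2 * j) + v (2 * j + 1) ≠ 0 := (hv 0 j).2
  have hw : renPotH p v j * pairSum x j =
      v (2 * j) * x (pairEquiv n (j, 0)) + v (2 * j + 1) * x (pairEquiv n (j, 1)) +
        p 1 * pairSum x j := by
    rw [renPotH, ← renStep, renStep_eq_of_ne_zero ha hb, pairSum]
    field_simp
    linear_combination (v (2 * j + 1) - v (2 * j)) * hbal
  rw [HmatT_eq_lapMat_add_diagonal, add_mulVec, Pi.add_apply, mulVec_diagonal, hw, Pi.smul_apply,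
    smul_eq_mul]
  linarith

end Decimation

lemma HmatT_zero_apply (p v : ℕ → ℝ) (j k : Fin (2 ^ 0)) : HmatT p v 0 0 j k = v 0 := by
  obtain ⟨j, hj⟩ := j
  obtain ⟨k, hk⟩ := k
  obtain rfl : j = 0 := by simpa using hj
  obtain rfl : k = 0 := by simpa using hk
  simp [HmatT, lapEntryT]

namespace RenNondegenerate

variable {p v : ℕ → ℝ}

theorem det_HmatT_ne_zero (hv : RenNondegenerate p v) (n : ℕ) : (HmatT p v n n).det ≠ 0 := by
  induction n generalizing p v with
  | zero =>
    have : Unique (Fin (2 ^ 0)) := inferInstanceAs (Unique (Fin 1))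
    rw [det_unique, HmatT_zero_apply]
    exact (hv 0 0).1
  | succ n ih =>
    rw [Ne, ← exists_mulVec_eq_zero_iff]
    rintro ⟨x, hx0, hx⟩
    have hxpair : ∀ j s, (HmatT p v (n + 1) (n + 1) *ᵥ x) (pairEquiv n (j, s)) =
        (0 : Fin (2 ^ n) → ℝ) j := by simp [hx]
    have hsum : pairSum x = 0 := eq_zero_of_mulVec_eq_zero (ih hv.shiftSeq_renPotH)
      (by rw [HmatT_renPotH_mulVec_pairSum hv hxpair, smul_zero])
    refine hx0 (funext fun m => ?_)
    obtain ⟨⟨k, t⟩, rfl⟩ := (pairEquiv n).surjective m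
    have hk : x (pairEquiv n (k, 0)) + x (pairEquiv n (k, 1)) = 0 := congrFun hsum k
    have hbal := HmatT_mulVec_pair_balance hxpair k
    have hx0 : x (pairEquiv n (k, 0)) = 0 := by
      have : (v (2 * k) + v (2 * k + 1)) * x (pairEquiv n (k, 0)) = 0 := by
        linear_combination hbal + v (2 * k + 1) * hk
      exact (mul_eq_zero.1 this).resolve_left (hv 0 k).2
    fin_cases t
    · exact hx0
    · simpa [hx0] using hk

theorem phiVec_dotProduct_inv_HmatT (hv : RenNondegenerate p v) (n : ℕ) :
    phiVec n ⬝ᵥ (HmatT p v n n)⁻¹ *ᵥ phiVec n = (renIter p n v 0)⁻¹ := by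
  induction n generalizing p v with
  | zero =>
    have hv0 : v 0 ≠ 0 := (hv 0 0).1
    have hsol : HmatT p v 0 0 *ᵥ (fun _ => (v 0)⁻¹) = phiVec 0 := by
      ext j
      simp [mulVec, dotProduct, HmatT_zero_apply, phiVec, hv0]
    rw [Matrix.inv_mulVec_eq_of_mulVec_eq (hv.det_HmatT_ne_zero 0) hsol]
    simp [dotProduct, phiVec, renIter]
  | succ n ih =>
    set x := (HmatT p v (n + 1) (n + 1))⁻¹ *ᵥ phiVec (n + 1)
    have hxpair : ∀ j s, (HmatT p v (n + 1) (n + 1) *ᵥ x) (pairEquiv n (j, s)) =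
        ((√2)⁻¹ • phiVec n) j := fun j s => by
      rw [Matrix.mulVec_inv_mulVec (hv.det_HmatT_ne_zero (n + 1)), phiVec_succ_apply n _ j,
        Pi.smul_apply, smul_eq_mul]
    have hsum : pairSum x =
        (2 * (√2)⁻¹) • ((HmatT (shiftSeq p) (renPotH p v) n n)⁻¹ *ᵥ phiVec n) := by
      rw [← Matrix.inv_mulVec_eq_of_mulVec_eq (hv.shiftSeq_renPotH.det_HmatT_ne_zero n)
        (HmatT_renPotH_mulVec_pairSum hv hxpair), mulVec_smul, mulVec_smul, smul_smul]
    have hsqrt : (√2)⁻¹ * (2 * (√2)⁻¹) = 1 := by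
      rw [mul_left_comm, ← mul_inv, Real.mul_self_sqrt zero_le_two, mul_inv_cancel₀ two_ne_zero]
    rw [phiVec_succ_dotProduct, hsum, dotProduct_smul, ih hv.shiftSeq_renPotH, smul_eq_mul,
      ← mul_assoc, hsqrt, one_mul, renIter_succ_eq_renIter_renPotH]

end RenNondegenerate

lemma measurable_renStep (q : ℝ) : Measurable fun z : ℝ × ℝ => renStep q z.1 z.2 := by
  unfold renStep
  fun_prop

lemma measurable_renIter (p : ℕ → ℝ) (j k : ℕ) : Measurable fun x : ℕ → ℝ => renIter p j x k := by
  induction j generalizing k with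
  | zero => exact measurable_pi_apply k
  | succ j ih => exact (measurable_renStep _).comp ((ih (2 * k)).prodMk (ih (2 * k + 1)))

lemma renIter_congr_block (p : ℕ → ℝ) {x y : ℕ → ℝ} (j k : ℕ)
    (h : ∀ i ∈ Ico (k * 2 ^ j) ((k + 1) * 2 ^ j), x i = y i) :
    renIter p j x k = renIter p j y k := by
  induction j generalizing k with
  | zero => exact h k (by simp)
  | succ j ih =>
    have hsub : ∀ t < 2, Ico ((2 * k + t) * 2 ^ j) ((2 * k + t + 1) * 2 ^ j) ⊆
        Ico (k * 2 ^ (j + 1)) ((k + 1) * 2 ^ (j + 1)) := fun t ht i hi => by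
      simp only [mem_Ico, pow_succ] at hi ⊢
      interval_cases t <;> constructor <;> ring_nf at hi ⊢ <;> omega
    rw [renIter_succ_apply, renIter_succ_apply, ih (2 * k) fun i hi => h i (hsub 0 two_pos hi),
      ih (2 * k + 1) fun i hi => h i (hsub 1 one_lt_two hi)]

/-- Off `{0, -x}`, `y ↦ renStep q x y = 2xy/(x+y) + q` is a Möbius map with differentiable inverse
`w ↦ x (w - q) / (2x - (w - q))`. -/
lemma volume_renStep_preimage_eq_zero {x : ℝ} (hx : x ≠ 0) (q : ℝ) {B : Set ℝ} (hB : volume B = 0) :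
    volume (renStep q x ⁻¹' B) = 0 := by
  set g : ℝ → ℝ := fun w => x * (w - q) / (2 * x - (w - q))
  have hsub : renStep q x ⁻¹' B ⊆ {0, -x} ∪ g '' (B \ {2 * x + q}) := by
    intro y hy
    by_cases hy0 : y = 0
    · exact Or.inl (Or.inl hy0)
    by_cases hyx : x + y = 0
    · exact Or.inl (Or.inr (by linarith : y = -x))
    have hstep : renStep q x y = 2 * x * y / (x + y) + q := renStep_eq_of_ne_zero hx hy0
    refine Or.inr ⟨renStep q x y, ⟨hy, fun hc => hx ?_⟩, ?_⟩
    · rw [Set.mem_singleton_iff, hstep, add_left_inj, div_eq_iff hyx] at hc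
      nlinarith
    · simp only [g, hstep, add_sub_cancel_right]
      rw [show 2 * x - 2 * x * y / (x + y) = 2 * x * x / (x + y) by field_simp; ring]
      field_simp
  have hg : DifferentiableOn ℝ g (B \ {2 * x + q}) := fun w hw =>
    (DifferentiableAt.div (by fun_prop) (by fun_prop) fun hc =>
      hw.2 (by rw [Set.mem_singleton_iff]; linarith)).differentiableWithinAt
  refine measure_mono_null hsub (measure_union_null ?_ ?_)
  · exact (Set.toFinite _).measure_zero _
  · exact addHaar_image_eq_zero_of_differentiableOn_of_addHaar_eq_zero volume hg
      (measure_mono_null Set.sdiff_subset hB)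

section Independence

variable {Ω : Type*} [MeasurableSpace Ω] {Pr : Measure Ω}

lemma ae_ne_of_map_absolutelyContinuous {α : Type*} [MeasurableSpace α] {ν : Measure α}
    [NullSingletonClass ν] {Y : Ω → α} (hY : AEMeasurable Y Pr) (hYa : Pr.map Y ≪ ν) (c : α) :
    ∀ᵐ ω ∂Pr, Y ω ≠ c :=
  ae_of_ae_map hY (hYa.ae_le (Measure.ae_ne ν c))

variable [IsFiniteMeasure Pr]

lemma ProbabilityTheory.IndepFun.measure_preimage_eq_zero_of_ae_slice {α β : Type*}
    [MeasurableSpace α] [MeasurableSpace β] {X : Ω → α} {Y : Ω → β} (hX : Measurable X)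
    (hY : Measurable Y) (hXY : IndepFun X Y Pr) {S : Set (α × β)} (hS : MeasurableSet S)
    (h : ∀ᵐ x ∂Pr.map X, Pr.map Y (Prod.mk x ⁻¹' S) = 0) :
    Pr ((fun ω => (X ω, Y ω)) ⁻¹' S) = 0 := by
  rw [← Measure.map_apply (hX.prodMk hY) hS,
    (indepFun_iff_map_prod_eq_prod_map_map hX.aemeasurable hY.aemeasurable).1 hXY,
    Measure.prod_apply hS, lintegral_congr_ae h, lintegral_zero]

lemma ProbabilityTheory.IndepFun.ae_add_ne_zero {X Y : Ω → ℝ} (hX : Measurable X)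
    (hY : Measurable Y) (hXY : IndepFun X Y Pr) (hYa : Pr.map Y ≪ volume) :
    ∀ᵐ ω ∂Pr, X ω + Y ω ≠ 0 := by
  have hS : MeasurableSet {z : ℝ × ℝ | z.1 + z.2 = 0} :=
    measurableSet_eq_fun (by fun_prop) measurable_const
  refine measure_eq_zero_iff_ae_notMem.1 (hXY.measure_preimage_eq_zero_of_ae_slice hX hY hS ?_)
  refine ae_of_all _ fun x => hYa ?_
  simp only [Set.preimage, Set.mem_ofPred_eq, add_eq_zero_iff_eq_neg']
  exact Real.volume_singleton

lemma ProbabilityTheory.IndepFun.map_renStep_absolutelyContinuous {X Y : Ω → ℝ} (hX : Measurable X)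
    (hY : Measurable Y) (hXY : IndepFun X Y Pr) (hXa : Pr.map X ≪ volume)
    (hYa : Pr.map Y ≪ volume) (q : ℝ) :
    Pr.map (fun ω => renStep q (X ω) (Y ω)) ≪ volume := by
  refine Measure.AbsolutelyContinuous.mk fun B hB hB0 => ?_
  have hm : Measurable fun ω => renStep q (X ω) (Y ω) := (measurable_renStep q).comp (hX.prodMk hY)
  rw [Measure.map_apply hm hB]
  refine hXY.measure_preimage_eq_zero_of_ae_slice hX hY (measurable_renStep q hB) ?_
  filter_upwards [hXa.ae_le (Measure.ae_ne volume 0)] with x hx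
  exact hYa (volume_renStep_preimage_eq_zero hx q hB0)

end Independence

section RandomInputs

variable {Ω : Type*} [MeasurableSpace Ω] {Pr : Measure Ω} {X : ℕ → Ω → ℝ}
  (p : ℕ → ℝ)

lemma ProbabilityTheory.iIndepFun.indepFun_renIter_two_mul (hX : iIndepFun X Pr)
    (hXm : ∀ i, Measurable (X i)) (j k : ℕ) :
    IndepFun (fun ω => renIter p j (X · ω) (2 * k))
      (fun ω => renIter p j (X · ω) (2 * k + 1)) Pr := by
  set block : ℕ → Finset ℕ := fun m => Ico (m * 2 ^ j) ((m + 1) * 2 ^ j)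
  have hfactor : ∀ m, (fun ω => renIter p j (X · ω) m) =
      (fun t : block m → ℝ => renIter p j (fun i => if h : i ∈ block m then t ⟨i, h⟩ else 0) m) ∘
        fun ω (i : block m) => X i ω := fun m =>
    funext fun ω => renIter_congr_block p j m fun i hi => by rw [dif_pos hi]
  have hmeas : ∀ m, Measurable fun t : block m → ℝ =>
      renIter p j (fun i => if h : i ∈ block m then t ⟨i, h⟩ else 0) m := fun m =>
    (measurable_renIter p j m).comp (measurable_pi_lambda _ fun i => by
      by_cases h : i ∈ block m
      · simpa [h] using measurable_pi_apply (⟨i, h⟩ : block m)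
      · simp [h])
  rw [hfactor, hfactor]
  exact (hX.indepFun_finset _ _ (Ico_disjoint_Ico_consecutive _ _ _) hXm).comp (hmeas _) (hmeas _)

lemma map_renIter_absolutelyContinuous [IsFiniteMeasure Pr] (hX : iIndepFun X Pr)
    (hXm : ∀ i, Measurable (X i)) (hXa : ∀ i, Pr.map (X i) ≪ volume) (j k : ℕ) :
    Pr.map (fun ω => renIter p j (X · ω) k) ≪ volume := by
  induction j generalizing k with
  | zero => exact hXa k
  | succ j ih =>
    exact (hX.indepFun_renIter_two_mul p hXm j k).map_renStep_absolutelyContinuous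
      ((measurable_renIter p j _).comp (measurable_pi_lambda _ fun i => hXm i))
      ((measurable_renIter p j _).comp (measurable_pi_lambda _ fun i => hXm i))
      (ih (2 * k)) (ih (2 * k + 1)) _

lemma ae_renNondegenerate [IsFiniteMeasure Pr] (hX : iIndepFun X Pr) (hXm : ∀ i, Measurable (X i))
    (hXa : ∀ i, Pr.map (X i) ≪ volume) : ∀ᵐ ω ∂Pr, RenNondegenerate p (X · ω) := by
  have hW : ∀ j k, Measurable fun ω => renIter p j (X · ω) k := fun j k =>
    (measurable_renIter p j k).comp (measurable_pi_lambda _ fun i => hXm i)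
  simp only [RenNondegenerate, ae_all_iff]
  exact fun j k => (ae_ne_of_map_absolutelyContinuous (hW j k).aemeasurable
    (map_renIter_absolutelyContinuous p hX hXm hXa j k) 0).and
      ((hX.indepFun_renIter_two_mul p hXm j k).ae_add_ne_zero (hW j _) (hW j _)
        (map_renIter_absolutelyContinuous p hX hXm hXa j _))

end RandomInputs

lemma map_sub_const_absolutelyContinuous {Ω : Type*} [MeasurableSpace Ω] {Pr : Measure Ω}
    {Y : Ω → ℝ} (hY : Measurable Y) (hYa : Pr.map Y ≪ volume) (E : ℝ) :
    Pr.map (fun ω => Y ω - E) ≪ volume := by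
  have hE : Measurable fun y : ℝ => y - E := measurable_id.sub_const E
  change Pr.map ((fun y => y - E) ∘ Y) ≪ volume
  rw [← Measure.map_map hE hY, ← (measurePreserving_sub_right volume E).map_eq]
  exact hYa.map hE

theorem phi_distribution_general
    {Ω : Type*} [MeasurableSpace Ω] (Pr : Measure Ω) [IsProbabilityMeasure Pr]
    (p : ℕ → ℝ)
    (V : ℕ → Ω → ℝ) (hVmeas : ∀ k, Measurable (V k))
    (hViid : iIndepFun V Pr)
    (ρ : ℝ → ℝ)
    (hρ : ∀ k, Measure.map (V k) Pr = volume.withDensity fun v => ENNReal.ofReal (ρ v))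
    (n : ℕ) (E : ℝ) :
    (∀ᵐ ω ∂Pr,
        IsUnit (HmatT p (fun i => V i ω) n n - E • (1 : Matrix (Fin (2 ^ n)) (Fin (2 ^ n)) ℝ)).det ∧
        phiVec n ⬝ᵥ
          (HmatT p (fun i => V i ω) n n - E • (1 : Matrix (Fin (2 ^ n)) (Fin (2 ^ n)) ℝ))⁻¹.mulVec
            (phiVec n) ≠ 0) ∧
    Measure.map (fun ω => (phiVec n ⬝ᵥ
        (HmatT p (fun i => V i ω) n n - E • (1 : Matrix (Fin (2 ^ n)) (Fin (2 ^ n)) ℝ))⁻¹.mulVec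
          (phiVec n))⁻¹) Pr =
      Measure.map (fun ω => renIter p n (fun k => V k ω - E) 0) Pr ∧
    Measure.map (fun ω => (phiVec n ⬝ᵥ
        (HmatT p (fun i => V i ω) n n - E • (1 : Matrix (Fin (2 ^ n)) (Fin (2 ^ n)) ℝ))⁻¹.mulVec
          (phiVec n))⁻¹) Pr ≪ volume := by
  set X : ℕ → Ω → ℝ := fun i ω => V i ω - E
  have hXm : ∀ i, Measurable (X i) := fun i => (hVmeas i).sub_const E
  have hX : iIndepFun X Pr := hViid.comp (fun _ v => v - E) fun _ => measurable_id.sub_const E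
  have hXa : ∀ i, Pr.map (X i) ≪ volume := fun i =>
    map_sub_const_absolutelyContinuous (hVmeas i) (hρ i ▸ withDensity_absolutelyContinuous _ _) E
  have hgood : ∀ᵐ ω ∂Pr, RenNondegenerate p (fun i => V i ω - E) :=
    ae_renNondegenerate p hX hXm hXa
  have hΦ : (fun ω => (phiVec n ⬝ᵥ (HmatT p (fun i => V i ω) n n - E • 1)⁻¹ *ᵥ phiVec n)⁻¹)
      =ᵐ[Pr] fun ω => renIter p n (fun i => V i ω - E) 0 := hgood.mono fun ω hω => by
    dsimp only
    rw [← HmatT_sub_const, hω.phiVec_dotProduct_inv_HmatT, inv_inv]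
  refine ⟨hgood.mono fun ω hω => ?_, Measure.map_congr hΦ, ?_⟩
  · rw [← HmatT_sub_const, hω.phiVec_dotProduct_inv_HmatT]
    exact ⟨isUnit_iff_ne_zero.2 (hω.det_HmatT_ne_zero n), inv_ne_zero (hω n 0).1⟩
  · rw [Measure.map_congr hΦ]
    exact map_renIter_absolutelyContinuous p hX hXm hXa n 0

/-- **Distribution of `Φ_n(E)`** (Corollary in Section 3): almost surely `H_{n,n} - E`
is invertible with `⟨φ_n, (H_{n,n}-E)^{-1} φ_n⟩ ≠ 0`, and
`Φ_n(E) = ⟨φ_n, (H_{n,n}-E)^{-1} φ_n⟩^{-1}` has the same law as the output `W^{(n)}_0` of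
the renormalization recursion applied to `2^n` i.i.d. copies of `V - E`; in particular its
law is absolutely continuous (with density `T_{p_n} ⋯ T_{p_1} ρ_E`). -/
theorem phi_distribution
    {Ω : Type*} [MeasurableSpace Ω] (Pr : Measure Ω) [IsProbabilityMeasure Pr]
    (p : ℕ → ℝ) (hps : Summable p)
    (V : ℕ → Ω → ℝ) (hVmeas : ∀ k, Measurable (V k))
    (hViid : iIndepFun V Pr)
    (ρ : ℝ → ℝ) (hρpos : ∀ v, 0 ≤ ρ v)
    (hρ : ∀ k, Measure.map (V k) Pr = volume.withDensity fun v => ENNReal.ofReal (ρ v))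
    (hρbd : ∃ M : ℝ, ∀ v, ρ v ≤ M)
    (n : ℕ) (hn : 1 ≤ n) (E : ℝ) :
    (∀ᵐ ω ∂Pr,
        IsUnit (HmatT p (fun i => V i ω) n n - E • (1 : Matrix (Fin (2 ^ n)) (Fin (2 ^ n)) ℝ)).det ∧
        phiVec n ⬝ᵥ
          (HmatT p (fun i => V i ω) n n - E • (1 : Matrix (Fin (2 ^ n)) (Fin (2 ^ n)) ℝ))⁻¹.mulVec
            (phiVec n) ≠ 0) ∧
    Measure.map (fun ω => (phiVec n ⬝ᵥ
        (HmatT p (fun i => V i ω) n n - E • (1 : Matrix (Fin (2 ^ n)) (Fin (2 ^ n)) ℝ))⁻¹.mulVec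
          (phiVec n))⁻¹) Pr =
      Measure.map (fun ω => renIter p n (fun k => V k ω - E) 0) Pr ∧
    Measure.map (fun ω => (phiVec n ⬝ᵥ
        (HmatT p (fun i => V i ω) n n - E • (1 : Matrix (Fin (2 ^ n)) (Fin (2 ^ n)) ℝ))⁻¹.mulVec
          (phiVec n))⁻¹) Pr ≪ volume :=
  phi_distribution_general Pr p V hVmeas hViid ρ hρ n E
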